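/- arXiv:1306.2059 — 5 statements merged into one kernel-verified Lean document; each statement's English description precedes it below -/
import Mathlib

section
/- Let Q = R(P − I) be a Q-matrix on a finite state space V, where R is diagonal with positive diagonal entries and P is a stochastic matrix. Then for every x ∈ V, det(−Q^{{x}}) ≥ 0, where Q^{{x}} is Q with the row and column of x removed. -/
open Matrix BigOperators

/-- The principal submatrix of `M` obtained by deleting the rows and columns
indexed by the finite set `Δ`. -/
def mdel {V : Type*} [DecidableEq V] (M : Matrix V V ℝ) (Δ : Finset V) :
    Matrix {a // a ∉ Δ} {a // a ∉ Δ} ℝ :=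
  M.submatrix Subtype.val Subtype.val

/-- For a nonnegative matrix with row sums at most 1, `det (1 - A) ≥ 0`. -/
lemma det_one_sub_nonneg {n : Type*} [Fintype n] [DecidableEq n]
    (A : Matrix n n ℝ) (hA : ∀ i j, 0 ≤ A i j) (hrow : ∀ i, ∑ j, A i j ≤ 1) :
    0 ≤ ((1 : Matrix n n ℝ) - A).det := by
  set f : ℝ → ℝ := fun s => ((1 : Matrix n n ℝ) - s • A).det with hf
  have hcont : Continuous f :=
    (continuous_const.sub (continuous_id.smul continuous_const)).matrix_det
  have hne : ∀ s ∈ Set.Ico (0 : ℝ) 1, f s ≠ 0 := by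
    intro s hs
    apply det_ne_zero_of_sum_row_lt_diag
    intro k
    have hdiag : ((1 : Matrix n n ℝ) - s • A) k k = 1 - s * A k k := by
      simp [Matrix.one_apply, Matrix.smul_apply, smul_eq_mul]
    have hkk : A k k ≤ ∑ j, A k j :=
      Finset.single_le_sum (fun j _ => hA k j) (Finset.mem_univ k)
    have hskk : s * A k k ≤ s * 1 := by
      have := hkk.trans (hrow k)
      nlinarith [hs.1, hA k k]
    have hoff : ∀ j ∈ Finset.univ.erase k, ‖((1 : Matrix n n ℝ) - s • A) k j‖ = s * A k j := by
      intro j hj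
      have hjk : j ≠ k := Finset.ne_of_mem_erase hj
      have : ((1 : Matrix n n ℝ) - s • A) k j = -(s * A k j) := by
        simp [Matrix.one_apply, Matrix.smul_apply, smul_eq_mul, Ne.symm hjk]
      rw [this, norm_neg, Real.norm_eq_abs, abs_of_nonneg (mul_nonneg hs.1 (hA k j))]
    rw [hdiag]
    rw [Finset.sum_congr rfl hoff]
    have hsum : ∑ j ∈ Finset.univ.erase k, s * A k j = s * ∑ j, A k j - s * A k k := by
      rw [← Finset.mul_sum, Finset.sum_erase_eq_sub (Finset.mem_univ k)]
      ring
    rw [hsum]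
    have h1 : s * ∑ j, A k j ≤ s * 1 := by
      nlinarith [hs.1, hrow k, Finset.sum_nonneg (fun j (_ : j ∈ Finset.univ) => hA k j)]
    have hd : (0:ℝ) ≤ 1 - s * A k k := by nlinarith [hs.2]
    rw [Real.norm_eq_abs, abs_of_nonneg hd]
    nlinarith [hs.2]
  have hf0 : f 0 = 1 := by simp [hf]
  have hf1 : f 1 = ((1 : Matrix n n ℝ) - A).det := by simp [hf]
  by_contra hlt
  push_neg at hlt
  have h01 : (0:ℝ) ≤ 1 := zero_le_one
  have := intermediate_value_Icc' h01 hcont.continuousOn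
  have hmem : (0:ℝ) ∈ Set.Icc (f 1) (f 0) := by
    constructor
    · rw [hf1]; exact hlt.le
    · rw [hf0]; exact zero_le_one
  obtain ⟨s, hs, hfs⟩ := this hmem
  have hs1 : s ≠ 1 := by
    intro h
    rw [h, hf1] at hfs
    exact absurd hfs (ne_of_lt hlt)
  exact hne s ⟨hs.1, lt_of_le_of_ne hs.2 hs1⟩ hfs

/-- If `Q = R(P - I)` is a `Q`-matrix on a finite state space, where `R` is diagonal
with positive diagonal entries and `P` is a stochastic matrix, then
`det(-Q^{{x}}) ≥ 0` for every state `x`. -/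
theorem stmt8 {V : Type*} [Fintype V] [DecidableEq V]
    (r : V → ℝ) (hr : ∀ v, 0 < r v)
    (P : Matrix V V ℝ) (hpos : ∀ a b, 0 ≤ P a b) (hrow : ∀ a, ∑ b, P a b = 1)
    (Q : Matrix V V ℝ) (hQ : Q = Matrix.diagonal r * (P - 1)) (x : V) :
    0 ≤ (mdel (-Q) {x}).det := by
  subst hQ
  set A : Matrix {a // a ∉ ({x} : Finset V)} {a // a ∉ ({x} : Finset V)} ℝ :=
    P.submatrix Subtype.val Subtype.val with hA
  have key : mdel (-(Matrix.diagonal r * (P - 1))) {x} =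
      Matrix.diagonal (fun i : {a // a ∉ ({x} : Finset V)} => r i.val) * (1 - A) := by
    ext i j
    simp only [mdel, Matrix.submatrix_apply, Matrix.neg_apply, Matrix.diagonal_mul,
      Matrix.sub_apply, Matrix.one_apply, hA, Subtype.val_inj]
    by_cases h : i = j <;> simp [h] <;> ring
  rw [key, Matrix.det_mul, Matrix.det_diagonal]
  apply mul_nonneg
  · exact le_of_lt (Finset.prod_pos (fun i _ => hr i.val))
  · apply det_one_sub_nonneg
    · intro i j; exact hpos _ _
    · intro i
      have hsub : ∑ j : {a // a ∉ ({x} : Finset V)}, A i j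
          = ∑ j ∈ ({x} : Finset V)ᶜ, P i.val j := by
        simp only [hA, Matrix.submatrix_apply]
        rw [← Finset.sum_subtype (({x} : Finset V)ᶜ) (fun a => Finset.mem_compl) _]
      rw [hsub]
      calc ∑ j ∈ ({x} : Finset V)ᶜ, P i.val j
          ≤ ∑ j, P i.val j := Finset.sum_le_sum_of_subset_of_nonneg
            (Finset.subset_univ _) (fun j _ _ => hpos _ _)
        _ = 1 := hrow _
end

section
/- Let Q = R(P − I) be a Q-matrix on a finite state space V with R diagonal with positive entries and P stochastic, and suppose the null space of Q is one-dimensional. Define π_x = det(−Q^{{x}}) / Π_{−Q}, where Π_{−Q} is the product of the nonzero eigenvalues of −Q. Then Π_{−Q} > 0, π is a probability distribution on V, and π is the unique probability vector satisfying πQ = 0. -/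
/-!
Put `v x := det (-Q^{{x}})`. Since `Q 𝟙 = 0` and `ker Q = ℝ 𝟙`, each column of `adj (-Q)` lies in
`ker Q` and is therefore constant, so every row of `adj (-Q)` equals `v`, and `adj (-Q) * Q = 0`
becomes `v Q = 0`. The coefficient of `λ` in a characteristic polynomial is, up to sign, the trace
of an adjugate, which gives `Π_{-Q} = ∑ x, v x`. Each `-Q^{{x}}` has nonpositive off-diagonal
entries and nonnegative row sums, so its determinant is `≥ 0`; and `v ≠ 0`, because a left null
vector `u` of `Q` with `u x ≠ 0` forces `-Q^{{x}}` to be nonsingular. Finally the left kernel of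
`Q` is one-dimensional like the right one, so every left null vector is a multiple of `v`.
-/

open Matrix BigOperators

/-- `Π_M`, the product of the nonzero eigenvalues of `M` (when `0` is an eigenvalue
of `M`): it equals `(-1)^{N-1}` times the coefficient of `λ` in the characteristic
polynomial of `M`. -/
noncomputable def prodNZ {V : Type*} [Fintype V] [DecidableEq V]
    (M : Matrix V V ℝ) : ℝ :=
  (-1) ^ (Fintype.card V - 1) * (Matrix.charpoly M).coeff 1

open Polynomial Module

theorem Polynomial.Monic.eval_zero_nonneg_of_no_pos_roots {p : ℝ[X]} (hp : p.Monic)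
    (h : ∀ t, 0 < t → p.eval t ≠ 0) : 0 ≤ p.eval 0 := by
  by_contra! h0
  rcases eq_or_ne p.natDegree 0 with hdeg | hdeg
  · rw [hp.natDegree_eq_zero.mp hdeg, eval_one] at h0
    linarith
  have htop := tendsto_atTop_of_leadingCoeff_nonneg p (natDegree_pos_iff_degree_pos.mp
    (Nat.pos_of_ne_zero hdeg)) (by rw [hp.leadingCoeff]; exact zero_le_one)
  obtain ⟨T, hT, hT0⟩ := ((htop.eventually_ge_atTop 0).and (Filter.eventually_ge_atTop 0)).exists
  obtain ⟨c, hc, hc0⟩ := intermediate_value_Ioc hT0 p.continuousOn ⟨h0, hT⟩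
  exact h c hc.1 hc0

namespace Matrix

section CommRing

variable {n R : Type*} [Fintype n] [DecidableEq n] [CommRing R]

theorem derivative_det (A : Matrix n n R[X]) :
    derivative A.det = ∑ i, (A.updateRow i fun j => derivative (A i j)).det := by
  simp_rw [← det_transpose A, ← det_transpose (A.updateRow _ _), det_apply, transpose_apply,
    map_sum]
  rw [Finset.sum_comm]
  refine Finset.sum_congr rfl fun σ _ => ?_
  simp_rw [Units.smul_def, map_zsmul, derivative_prod_finset, ← Finset.smul_sum]
  congr 1
  refine Finset.sum_congr rfl fun i _ => ?_
  rw [← Finset.prod_erase_mul _ _ (Finset.mem_univ i), updateRow_self]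
  congr 1
  refine Finset.prod_congr rfl fun j hj => ?_
  rw [updateRow_ne (Finset.ne_of_mem_erase hj)]

theorem charpoly_coeff_one (M : Matrix n n R) :
    M.charpoly.coeff 1 = trace (adjugate (-M)) := by
  have hcoeff : M.charpoly.coeff 1 = (derivative M.charpoly).eval 0 := by
    simp [← coeff_zero_eq_eval_zero, coeff_derivative]
  have hrow (i : n) : (fun j => derivative (charmatrix M i j)) = Pi.single i 1 := by
    funext j
    rcases eq_or_ne j i with rfl | hji
    · simp
    · simp [charmatrix_apply_ne _ _ _ hji.symm, hji]
  have heval : (charmatrix M).map (eval 0) = -M := by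
    ext a b
    rcases eq_or_ne a b with rfl | hab <;> simp [charmatrix_apply_ne, *]
  rw [hcoeff, charpoly, derivative_det, eval_finsetSum]
  refine Finset.sum_congr rfl fun i _ => ?_
  rw [diag_apply, adjugate_apply, ← coe_evalRingHom, RingHom.map_det, RingHom.mapMatrix_apply,
    coe_evalRingHom, map_updateRow, heval, hrow]
  congr 2
  ext j
  rcases eq_or_ne j i with rfl | hji <;> simp [*]

theorem adjugate_apply_self (A : Matrix n n R) (x : n) :
    adjugate A x x =
      (A.submatrix (Subtype.val : {a // a ∉ ({x} : Finset n)} → n) Subtype.val).det := by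
  let e := Equiv.sumCompl (· ∈ ({x} : Finset n))
  have h12 : ((A.updateRow x (Pi.single x 1)).submatrix e e).toBlocks₁₂ = 0 := by
    ext ⟨a, ha⟩ ⟨b, hb⟩
    rw [Finset.mem_singleton] at ha hb
    subst ha
    simp [e, toBlocks₁₂, Ne.symm hb]
  have h22 : ((A.updateRow x (Pi.single x 1)).submatrix e e).toBlocks₂₂ =
      A.submatrix Subtype.val Subtype.val := by
    ext ⟨a, ha⟩ ⟨b, hb⟩
    rw [Finset.mem_singleton] at ha
    simp [e, toBlocks₂₂, ha]
  rw [adjugate_apply, ← det_submatrix_equiv_self e, ← fromBlocks_toBlocks (submatrix _ e e), h12,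
    det_fromBlocks_zero₁₂, det_eq_elem_of_subsingleton _ ⟨x, Finset.mem_singleton_self x⟩, h22,
    toBlocks₁₁]
  simp [e]

end CommRing

variable {n K : Type*} [Fintype n] [DecidableEq n] [Field K]

theorem det_nonneg_of_offDiag_nonpos_of_sum_row_nonneg (A : Matrix n n ℝ)
    (hoff : ∀ i j, i ≠ j → A i j ≤ 0) (hrow : ∀ i, 0 ≤ ∑ j, A i j) : 0 ≤ A.det := by
  have hdom (i : n) : ∑ j ∈ Finset.univ.erase i, |A i j| ≤ A i i := by
    rw [Finset.sum_congr rfl fun j hj => abs_of_nonpos (hoff i j (Finset.ne_of_mem_erase hj).symm),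
      Finset.sum_neg_distrib, neg_le_iff_add_nonneg', Finset.sum_erase_add _ _ (Finset.mem_univ i)]
    exact hrow i
  -- for `t > 0`, `scalar n t + A` is strictly diagonally dominant
  have hdet (t : ℝ) (ht : 0 < t) : (-A).charpoly.eval t ≠ 0 := by
    rw [eval_charpoly, sub_neg_eq_add]
    refine det_ne_zero_of_sum_row_lt_diag fun i => ?_
    have hAii : 0 ≤ A i i := (Finset.sum_nonneg fun j _ => abs_nonneg (A i j)).trans (hdom i)
    calc ∑ j ∈ Finset.univ.erase i, ‖(scalar n t + A) i j‖
        = ∑ j ∈ Finset.univ.erase i, |A i j| := Finset.sum_congr rfl fun j hj => by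
          simp [Real.norm_eq_abs, (Finset.ne_of_mem_erase hj).symm]
      _ < ‖(scalar n t + A) i i‖ := by
          rw [add_apply, scalar_apply, diagonal_apply_eq, Real.norm_eq_abs,
            abs_of_pos (by positivity)]
          linarith [hdom i]
  simpa [eval_charpoly] using (charpoly_monic (-A)).eval_zero_nonneg_of_no_pos_roots hdet

theorem finrank_ker_toLin'_transpose (A : Matrix n n K) :
    finrank K (LinearMap.ker (toLin' Aᵀ)) = finrank K (LinearMap.ker (toLin' A)) := by
  have h := A.mulVecLin.finrank_range_add_finrank_ker
  have hT := Aᵀ.mulVecLin.finrank_range_add_finrank_ker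
  have hrank : Aᵀ.rank = A.rank := rank_transpose A
  rw [rank, rank] at hrank
  rw [hrank] at hT
  exact Nat.add_left_cancel (hT.trans h.symm)

theorem det_eq_zero_of_finrank_ker_pos {A : Matrix n n K}
    (h : 0 < finrank K (LinearMap.ker (toLin' A))) : A.det = 0 := by
  rw [← LinearMap.det_toLin', LinearMap.det_eq_zero_iff_ker_ne_bot]
  intro hbot
  rw [hbot, finrank_bot] at h
  exact h.false

theorem adjugate_apply_eq_of_ker_le_span_one {A : Matrix n n K} (hA : A.det = 0)
    (hker : LinearMap.ker (toLin' A) ≤ K ∙ 1) (i j : n) : adjugate A i j = adjugate A j j := by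
  have hcol : (fun i => adjugate A i j) ∈ LinearMap.ker (toLin' A) := by
    rw [LinearMap.mem_ker, toLin'_apply]
    ext a
    simpa [hA, mul_apply, mulVec, dotProduct] using congrFun (congrFun (mul_adjugate A) a) j
  obtain ⟨c, hc⟩ := Submodule.mem_span_singleton.mp (hker hcol)
  rw [← congrFun hc i, ← congrFun hc j]
  simp

theorem det_submatrix_compl_singleton_ne_zero {A : Matrix n n K}
    (hker : LinearMap.ker (toLin' A) ≤ K ∙ 1) {u : n → K} (hu : u ᵥ* A = 0) {x : n}
    (hux : u x ≠ 0) :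
    (A.submatrix (Subtype.val : {a // a ∉ ({x} : Finset n)} → n) Subtype.val).det ≠ 0 := by
  intro h0
  obtain ⟨w, hw0, hw⟩ := exists_mulVec_eq_zero_iff.mpr h0
  let w' : n → K := fun a => if h : a ∈ ({x} : Finset n) then 0 else w ⟨a, h⟩
  have hAw'_ne (a : n) (ha : a ∉ ({x} : Finset n)) : (A *ᵥ w') a = 0 := by
    refine Eq.trans ?_ (congrFun hw ⟨a, ha⟩)
    rw [mulVec, dotProduct, ← Fintype.sum_subtype_add_sum_subtype (· ∈ ({x} : Finset n)),
      Finset.sum_eq_zero fun b _ => by simp [w', Finset.mem_singleton.mp b.2], zero_add]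
    exact Finset.sum_congr rfl fun b _ => by simp only [w', dif_neg b.2, submatrix_apply]
  have hAw'_x : (A *ᵥ w') x = 0 := by
    have h := dotProduct_mulVec u A w'
    rw [hu, zero_dotProduct, dotProduct, Finset.sum_eq_single x
      (fun b _ hb => by rw [hAw'_ne b (by simpa using hb), mul_zero]) (by simp)] at h
    exact (mul_eq_zero.mp h).resolve_left hux
  have hAw' : w' ∈ LinearMap.ker (toLin' A) := by
    rw [LinearMap.mem_ker, toLin'_apply]
    ext a
    by_cases ha : a ∈ ({x} : Finset n)
    · rw [Finset.mem_singleton.mp ha, hAw'_x]; rfl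
    · exact hAw'_ne a ha
  obtain ⟨c, hc⟩ := Submodule.mem_span_singleton.mp (hker hAw')
  have hc0 : c = 0 := by simpa [w'] using congrFun hc x
  refine hw0 (funext fun a => ?_)
  have ha : (a : n) ≠ x := by simpa using a.2
  simpa [w', hc0, ha] using (congrFun hc a).symm

end Matrix

section QMatrix

variable {V : Type*} [Fintype V]

structure IsQMatrix (Q : Matrix V V ℝ) : Prop where
  offDiag_nonneg : ∀ i j, i ≠ j → 0 ≤ Q i j
  sum_row_eq_zero : ∀ i, ∑ j, Q i j = 0

theorem IsQMatrix.mulVec_one {Q : Matrix V V ℝ} (hQ : IsQMatrix Q) : Q *ᵥ 1 = 0 := by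
  ext i
  simpa [mulVec, dotProduct] using hQ.sum_row_eq_zero i

variable [DecidableEq V]

theorem prodNZ_eq_sum_det_mdel (M : Matrix V V ℝ) : prodNZ M = ∑ x, (mdel M {x}).det := by
  rw [prodNZ, charpoly_coeff_one, ← neg_one_smul ℝ M, adjugate_smul, trace_smul, smul_eq_mul,
    ← mul_assoc, ← mul_pow, neg_one_mul, neg_neg, one_pow, one_mul]
  exact Finset.sum_congr rfl fun x _ => adjugate_apply_self M x

theorem isQMatrix_diagonal_mul_sub_one {r : V → ℝ} (hr : ∀ v, 0 ≤ r v) {P : Matrix V V ℝ}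
    (hP : ∀ a b, 0 ≤ P a b) (hrow : ∀ a, ∑ b, P a b = 1) :
    IsQMatrix (diagonal r * (P - 1)) where
  offDiag_nonneg i j hij := by
    simpa [diagonal_mul, one_apply_ne hij] using mul_nonneg (hr i) (hP i j)
  sum_row_eq_zero i := by
    simp [diagonal_mul, ← Finset.mul_sum, hrow, one_apply]

namespace IsQMatrix
variable {Q : Matrix V V ℝ}

theorem det_mdel_neg_nonneg (hQ : IsQMatrix Q) (Δ : Finset V) : 0 ≤ (mdel (-Q) Δ).det := by
  refine det_nonneg_of_offDiag_nonpos_of_sum_row_nonneg _ (fun a b hab => ?_) fun a => ?_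
  · exact neg_nonpos.mpr (hQ.offDiag_nonneg a b (Subtype.coe_injective.ne hab))
  · have hsplit := Fintype.sum_subtype_add_sum_subtype (· ∈ Δ) (Q a)
    rw [hQ.sum_row_eq_zero] at hsplit
    simp only [mdel, submatrix_apply, Matrix.neg_apply, Finset.sum_neg_distrib]
    rw [← add_eq_zero_iff_neg_eq.mp hsplit, neg_neg]
    exact Finset.sum_nonneg fun (b : {b // b ∈ Δ}) _ =>
      hQ.offDiag_nonneg _ _ fun h => a.2 (h ▸ b.2)

theorem ker_eq_span_one (hQ : IsQMatrix Q) (hnull : finrank ℝ (LinearMap.ker (toLin' Q)) = 1) :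
    LinearMap.ker (toLin' Q) = ℝ ∙ 1 := by
  have : Nonempty V := Fintype.card_pos_iff.mp
    (by simpa [hnull] using Submodule.finrank_le (LinearMap.ker (toLin' Q)) : 1 ≤ _)
  refine (Submodule.eq_of_le_of_finrank_le ?_ ?_).symm
  · rw [Submodule.span_singleton_le_iff_mem, LinearMap.mem_ker, toLin'_apply, hQ.mulVec_one]
  · rw [hnull, finrank_span_singleton one_ne_zero]

theorem ker_neg_eq_span_one (hQ : IsQMatrix Q)
    (hnull : finrank ℝ (LinearMap.ker (toLin' Q)) = 1) :
    LinearMap.ker (toLin' (-Q)) = ℝ ∙ 1 := by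
  rw [map_neg, LinearMap.ker_neg, hQ.ker_eq_span_one hnull]

theorem vecMul_det_mdel_neg_eq_zero (hQ : IsQMatrix Q)
    (hnull : finrank ℝ (LinearMap.ker (toLin' Q)) = 1) :
    (fun x => (mdel (-Q) {x}).det) ᵥ* Q = 0 := by
  have hdet : (-Q).det = 0 := by
    rw [det_neg, det_eq_zero_of_finrank_ker_pos (hnull ▸ one_pos), mul_zero]
  ext z
  have hrow : (fun x => (mdel (-Q) {x}).det) = fun x => adjugate (-Q) z x := funext fun x => by
    rw [adjugate_apply_eq_of_ker_le_span_one hdet (hQ.ker_neg_eq_span_one hnull).le,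
      adjugate_apply_self]
    rfl
  have hzz := congrFun (congrFun (adjugate_mul (-Q)) z) z
  rw [hdet, zero_smul] at hzz
  rw [hrow]
  simpa [vecMul, dotProduct, mul_apply] using hzz

theorem exists_det_mdel_neg_ne_zero (hQ : IsQMatrix Q)
    (hnull : finrank ℝ (LinearMap.ker (toLin' Q)) = 1) : ∃ x, (mdel (-Q) {x}).det ≠ 0 := by
  have hdet : (-Q).det = 0 := by
    rw [det_neg, det_eq_zero_of_finrank_ker_pos (hnull ▸ one_pos), mul_zero]
  obtain ⟨u, hu0, hu⟩ := exists_vecMul_eq_zero_iff.mpr hdet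
  obtain ⟨x, hx⟩ := Function.ne_iff.mp hu0
  exact ⟨x, det_submatrix_compl_singleton_ne_zero (hQ.ker_neg_eq_span_one hnull).le hu hx⟩

theorem eq_smul_of_vecMul_eq_zero (hQ : IsQMatrix Q)
    (hnull : finrank ℝ (LinearMap.ker (toLin' Q)) = 1) {μ : V → ℝ} (hμ : μ ᵥ* Q = 0) :
    ∃ c : ℝ, μ = c • fun x => (mdel (-Q) {x}).det := by
  have hmem {w : V → ℝ} (hw : w ᵥ* Q = 0) : w ∈ LinearMap.ker (toLin' Qᵀ) := by
    rwa [LinearMap.mem_ker, toLin'_apply, mulVec_transpose]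
  have hv0 : (fun x => (mdel (-Q) {x}).det) ≠ 0 := by
    obtain ⟨x, hx⟩ := hQ.exists_det_mdel_neg_ne_zero hnull
    exact fun h => hx (congrFun h x)
  obtain ⟨c, hc⟩ := (finrank_eq_one_iff_of_nonzero' ⟨_, hmem (hQ.vecMul_det_mdel_neg_eq_zero hnull)⟩
    (by simpa using hv0)).mp ((finrank_ker_toLin'_transpose Q).trans hnull) ⟨μ, hmem hμ⟩
  exact ⟨c, congrArg Subtype.val hc.symm⟩

end IsQMatrix

end QMatrix

/-- Theorem (stationary distribution formula): let `Q = R(P-I)` be a `Q`-matrix with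
`R` diagonal positive and `P` stochastic, and suppose the null space of `Q` is
one-dimensional.  With `π_x = det(-Q^{{x}}) / Π_{-Q}`, one has `Π_{-Q} > 0`, `π` is a
probability distribution, `πQ = 0`, and `π` is the unique probability vector with
`μQ = 0`. -/
theorem stmt9 {V : Type*} [Fintype V] [DecidableEq V]
    (r : V → ℝ) (hr : ∀ v, 0 < r v)
    (P : Matrix V V ℝ) (hpos : ∀ a b, 0 ≤ P a b) (hrow : ∀ a, ∑ b, P a b = 1)
    (Q : Matrix V V ℝ) (hQ : Q = Matrix.diagonal r * (P - 1))
    (hnull : Module.finrank ℝ (LinearMap.ker (Matrix.toLin' Q)) = 1) :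
    0 < prodNZ (-Q) ∧
    (∀ x : V, 0 ≤ (mdel (-Q) {x}).det / prodNZ (-Q)) ∧
    (∑ x : V, (mdel (-Q) {x}).det / prodNZ (-Q) = 1) ∧
    (∀ z : V, ∑ x : V, ((mdel (-Q) {x}).det / prodNZ (-Q)) * Q x z = 0) ∧
    (∀ μ : V → ℝ, (∀ x, 0 ≤ μ x) → (∑ x, μ x = 1) →
      (∀ z : V, ∑ x : V, μ x * Q x z = 0) →
      μ = fun x => (mdel (-Q) {x}).det / prodNZ (-Q)) := by
  have hQm : IsQMatrix Q := hQ ▸ isQMatrix_diagonal_mul_sub_one (fun v => (hr v).le) hpos hrow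
  have hprod : prodNZ (-Q) = ∑ x, (mdel (-Q) {x}).det := prodNZ_eq_sum_det_mdel (-Q)
  have hpos_prod : 0 < prodNZ (-Q) := by
    obtain ⟨x, hx⟩ := hQm.exists_det_mdel_neg_ne_zero hnull
    rw [hprod]
    exact Finset.sum_pos' (fun y _ => hQm.det_mdel_neg_nonneg {y})
      ⟨x, Finset.mem_univ x, (hQm.det_mdel_neg_nonneg {x}).lt_of_ne' hx⟩
  refine ⟨hpos_prod, fun x => div_nonneg (hQm.det_mdel_neg_nonneg {x}) hpos_prod.le, ?_, ?_, ?_⟩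
  · rw [← Finset.sum_div, ← hprod, div_self hpos_prod.ne']
  · intro z
    simp_rw [div_mul_eq_mul_div, ← Finset.sum_div]
    exact div_eq_zero_iff.mpr (.inl (congrFun (hQm.vecMul_det_mdel_neg_eq_zero hnull) z))
  · intro μ _ hμ1 hμQ
    obtain ⟨c, rfl⟩ := hQm.eq_smul_of_vecMul_eq_zero hnull (funext hμQ)
    have hc : c = 1 / prodNZ (-Q) := by
      rw [eq_div_iff hpos_prod.ne', hprod, Finset.mul_sum]
      exact hμ1
    funext x
    rw [Pi.smul_apply, smul_eq_mul, hc, one_div_mul_eq_div]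
end

section
/- Let P be a stochastic matrix on a finite state space V. For any subsets Δ_1 ⊆ Δ_2 ⊊ V, det((I−P)^{Δ_1}) ≤ det((I−P)^{Δ_2}), where (I−P)^Δ denotes the principal submatrix of I−P with rows and columns in Δ removed. In particular all such determinants are nonnegative. -/
/-!
Pivoting a Z-matrix (nonpositive off-diagonal entries) with nonnegative row sums on a positive
diagonal entry `A i i` gives `det A = A i i * det S`, where the Schur complement `S` is again such
a matrix and depends monotonically on `A`; a zero diagonal entry forces a zero row. Induction on
the size then shows that on these matrices `det` is nonnegative and monotone for the entrywise
order. Replacing the rows and columns in `Δ` of `I - P` by those of the identity, instead of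
deleting them, keeps the determinant and makes the matrix grow entrywise with `Δ`.
-/

open Matrix BigOperators

namespace Matrix

variable {ι K : Type*}

def pivotSchur [Field K] (A : Matrix ι ι K) (i : ι) : Matrix {j // j ≠ i} {j // j ≠ i} K :=
  of fun j k => A j k - A j i * A i k / A i i

theorem det_eq_mul_det_pivotSchur [Fintype ι] [DecidableEq ι] [Field K] (A : Matrix ι ι K)
    {i : ι} (h : A i i ≠ 0) : A.det = A i i * (A.pivotSchur i).det := by
  let e : {j // j ≠ i} ⊕ Unit ≃ ι :=
    (Equiv.optionEquivSumPUnit _).symm.trans (Equiv.optionSubtypeNe i)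
  have hinv : (A.submatrix e e).toBlocks₂₂ * of (fun _ _ => (A i i)⁻¹) = 1 := by
    ext
    simp [e, toBlocks₂₂, mul_apply, h]
  let _ : Invertible (A.submatrix e e).toBlocks₂₂ :=
    ⟨_, by ext; simp [e, toBlocks₂₂, mul_apply, h], hinv⟩
  rw [← det_submatrix_equiv_self e, ← fromBlocks_toBlocks (A.submatrix e e),
    det_fromBlocks₂₂, invOf_eq_right_inv hinv, det_unique]
  congr 2
  ext j k
  simp [e, toBlocks₁₁, toBlocks₁₂, toBlocks₂₁, pivotSchur, mul_apply, div_eq_mul_inv]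
  ring

theorem rowSum_nonneg_of_le [Fintype ι] [AddCommMonoid K] [PartialOrder K]
    [IsOrderedAddMonoid K] {A C : Matrix ι ι K} (hrow : ∀ j, 0 ≤ ∑ k, A j k)
    (hAC : ∀ j k, A j k ≤ C j k) (j : ι) :
    0 ≤ ∑ k, C j k :=
  (hrow j).trans (Finset.sum_le_sum fun k _ => hAC j k)

def IsZMatrix {R : Type*} [Zero R] [LE R] (A : Matrix ι ι R) : Prop :=
  ∀ i j, i ≠ j → A i j ≤ 0

namespace IsZMatrix

variable [Field K] [LinearOrder K] [IsStrictOrderedRing K] {A C : Matrix ι ι K}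

theorem pivotSchur (hA : A.IsZMatrix) {i : ι} (hi : 0 < A i i) :
    (A.pivotSchur i).IsZMatrix := by
  intro j k hjk
  have hcorr : 0 ≤ A j i * A i k / A i i :=
    div_nonneg (mul_nonneg_of_nonpos_of_nonpos (hA j i j.2) (hA i k (Ne.symm k.2))) hi.le
  have hjk' : A j k ≤ 0 := hA j k fun h => hjk (Subtype.ext h)
  simp only [Matrix.pivotSchur, of_apply]
  linarith

theorem pivotSchur_le_pivotSchur (hA : A.IsZMatrix) (hC : C.IsZMatrix)
    (hAC : ∀ j k, A j k ≤ C j k) {i : ι} (hi : 0 < A i i) (j k : {j // j ≠ i}) :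
    A.pivotSchur i j k ≤ C.pivotSchur i j k := by
  have hcorr : C j i * C i k / C i i ≤ A j i * A i k / A i i :=
    div_le_div₀ (mul_nonneg_of_nonpos_of_nonpos (hA j i j.2) (hA i k (Ne.symm k.2)))
      (mul_le_mul_of_nonpos_of_nonpos (hAC j i) (hAC i k) (hA j i j.2) (hC i k (Ne.symm k.2)))
      hi (hAC i i)
  simp only [Matrix.pivotSchur, of_apply]
  linarith [hAC j k]

variable [Fintype ι] [DecidableEq ι]

theorem diag_nonneg (hA : A.IsZMatrix) (hrow : ∀ j, 0 ≤ ∑ k, A j k) (i : ι) :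
    0 ≤ A i i := by
  have hoff : ∑ k : {k // k ≠ i}, A i k ≤ 0 :=
    Finset.sum_nonpos fun k _ => hA i k (Ne.symm k.2)
  linarith [hrow i, Fintype.sum_eq_add_sum_subtype_ne (A i) i]

theorem row_eq_zero_of_diag_eq_zero (hA : A.IsZMatrix) (hrow : ∀ j, 0 ≤ ∑ k, A j k) {i : ι}
    (hi : A i i = 0) (k : ι) : A i k = 0 := by
  obtain rfl | hk := eq_or_ne i k
  · exact hi
  have hoff : ∀ l ∈ (Finset.univ.erase i), A i l ≤ 0 := fun l hl =>
    hA i l (Ne.symm (Finset.ne_of_mem_erase hl))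
  have hsum : ∑ l ∈ Finset.univ.erase i, A i l = 0 :=
    le_antisymm (Finset.sum_nonpos hoff)
      (by linarith [hrow i, Finset.add_sum_erase Finset.univ (A i) (Finset.mem_univ i)])
  exact (Finset.sum_eq_zero_iff_of_nonpos hoff).mp hsum k (by simp [Ne.symm hk])

theorem pivotSchur_rowSum_nonneg (hA : A.IsZMatrix) (hrow : ∀ j, 0 ≤ ∑ k, A j k) {i : ι}
    (hi : 0 < A i i) (j : {j // j ≠ i}) : 0 ≤ ∑ k, A.pivotSchur i j k := by
  have hsum : ∀ l, ∑ k : {k // k ≠ i}, A l k = ∑ k, A l k - A l i := fun l => by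
    linarith [Fintype.sum_eq_add_sum_subtype_ne (A l) i]
  have hrowSum : ∑ k, A.pivotSchur i j k = ∑ k, A j k - A j i * (∑ k, A i k) / A i i := by
    simp only [Matrix.pivotSchur, of_apply, Finset.sum_sub_distrib, mul_div_assoc,
      ← Finset.mul_sum, ← Finset.sum_div, hsum]
    field_simp
    ring
  have hcorr : A j i * (∑ k, A i k) / A i i ≤ 0 :=
    div_nonpos_of_nonpos_of_nonneg
      (mul_nonpos_of_nonpos_of_nonneg (hA j i j.2) (hrow i)) hi.le
  linarith [hrow j]

theorem det_nonneg (hA : A.IsZMatrix) (hrow : ∀ j, 0 ≤ ∑ k, A j k) : 0 ≤ A.det := by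
  induction hn : Fintype.card ι generalizing ι with
  | zero =>
    have := Fintype.card_eq_zero_iff.mp hn
    simp
  | succ n ih =>
    obtain ⟨i⟩ := Fintype.card_pos_iff.mp (by omega : 0 < Fintype.card ι)
    obtain hi | hi := (hA.diag_nonneg hrow i).eq_or_lt
    · rw [det_eq_zero_of_row_eq_zero i (hA.row_eq_zero_of_diag_eq_zero hrow hi.symm)]
    · rw [det_eq_mul_det_pivotSchur A hi.ne']
      exact mul_nonneg hi.le (ih (hA.pivotSchur hi) (hA.pivotSchur_rowSum_nonneg hrow hi)
        (by simp [Fintype.card_subtype_compl, hn]))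

theorem det_le_det (hA : A.IsZMatrix) (hrow : ∀ j, 0 ≤ ∑ k, A j k) (hC : C.IsZMatrix)
    (hAC : ∀ j k, A j k ≤ C j k) : A.det ≤ C.det := by
  have hrowC := rowSum_nonneg_of_le hrow hAC
  induction hn : Fintype.card ι generalizing ι with
  | zero =>
    have := Fintype.card_eq_zero_iff.mp hn
    simp
  | succ n ih =>
    obtain ⟨i⟩ := Fintype.card_pos_iff.mp (by omega : 0 < Fintype.card ι)
    obtain hi | hi := (hA.diag_nonneg hrow i).eq_or_lt
    · rw [det_eq_zero_of_row_eq_zero i (hA.row_eq_zero_of_diag_eq_zero hrow hi.symm)]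
      exact hC.det_nonneg hrowC
    have hCi : 0 < C i i := hi.trans_le (hAC i i)
    have hSC := hC.pivotSchur hCi
    have hS : (A.pivotSchur i).det ≤ (C.pivotSchur i).det :=
      ih (hA.pivotSchur hi) (hA.pivotSchur_rowSum_nonneg hrow hi) hSC
        (hA.pivotSchur_le_pivotSchur hC hAC hi) (hC.pivotSchur_rowSum_nonneg hrowC hCi)
        (by simp [Fintype.card_subtype_compl, hn])
    rw [det_eq_mul_det_pivotSchur A hi.ne', det_eq_mul_det_pivotSchur C hCi.ne']
    calc A i i * (A.pivotSchur i).det ≤ A i i * (C.pivotSchur i).det := by gcongr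
      _ ≤ C i i * (C.pivotSchur i).det :=
        mul_le_mul_of_nonneg_right (hAC i i)
          (hSC.det_nonneg (hC.pivotSchur_rowSum_nonneg hrowC hCi))

end IsZMatrix

section WithIdentityOn

variable [DecidableEq ι]

def withIdentityOn [Zero K] [One K] (A : Matrix ι ι K) (Δ : Finset ι) : Matrix ι ι K :=
  of fun a b => if a ∈ Δ ∨ b ∈ Δ then (1 : Matrix ι ι K) a b else A a b

@[simp]
theorem withIdentityOn_empty [Zero K] [One K] (A : Matrix ι ι K) : A.withIdentityOn ∅ = A := by
  ext; simp [withIdentityOn]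

theorem det_withIdentityOn [Fintype ι] [CommRing K] (A : Matrix ι ι K) (Δ : Finset ι) :
    (A.withIdentityOn Δ).det =
      (A.submatrix (Subtype.val : {a // a ∉ Δ} → ι) Subtype.val).det := by
  rw [twoBlockTriangular_det (A.withIdentityOn Δ) (· ∈ Δ)]
  · have hΔ : (A.withIdentityOn Δ).toSquareBlockProp (· ∈ Δ) = 1 := by
      ext a b
      simp only [toSquareBlockProp, toBlock_apply, withIdentityOn, of_apply,
        if_pos (Or.inl a.2), one_apply, Subtype.ext_iff]
    -- `convert` reconciles the `Fintype` instances `Finset.Subtype.fintype` and `Subtype.fintype`.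
    convert one_mul _
    · rw [hΔ]; convert det_one
    · ext a b
      simp [toSquareBlockProp, withIdentityOn, a.2, b.2]
  · intro a ha b hb
    simp [withIdentityOn, hb, one_apply_ne (ne_of_mem_of_not_mem hb ha).symm]

variable [Preorder K] [Zero K] [One K] {A : Matrix ι ι K}

theorem IsZMatrix.withIdentityOn (hA : A.IsZMatrix) (Δ : Finset ι) :
    (A.withIdentityOn Δ).IsZMatrix := by
  intro a b hab
  simp only [Matrix.withIdentityOn, of_apply, one_apply_ne hab]
  split_ifs
  · exact le_rfl
  · exact hA a b hab

theorem withIdentityOn_le_withIdentityOn (hA : A.IsZMatrix) (hdiag : ∀ a, A a a ≤ 1)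
    {Δ Δ' : Finset ι} (h : Δ ⊆ Δ') (a b : ι) :
    A.withIdentityOn Δ a b ≤ A.withIdentityOn Δ' a b := by
  have hA1 : A a b ≤ (1 : Matrix ι ι K) a b := by
    obtain rfl | hab := eq_or_ne a b
    · simpa using hdiag a
    · simpa [one_apply_ne hab] using hA a b hab
  simp only [withIdentityOn, of_apply]
  by_cases h' : a ∈ Δ' ∨ b ∈ Δ'
  · rw [if_pos h']
    split_ifs
    exacts [le_rfl, hA1]
  · rw [if_neg h', if_neg fun hΔ => h' (hΔ.imp (@h _) (@h _))]

end WithIdentityOn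

theorem isZMatrix_one_sub [Ring K] [PartialOrder K] [IsOrderedRing K] [DecidableEq ι]
    {P : Matrix ι ι K} (hP : ∀ a b, 0 ≤ P a b) : (1 - P).IsZMatrix := fun a b hab => by
  simpa [one_apply_ne hab] using hP a b

end Matrix

theorem stmt12_general {V : Type*} [Fintype V] [DecidableEq V] (P : Matrix V V ℝ)
    (hpos : ∀ a b, 0 ≤ P a b) (hrow : ∀ a, ∑ b, P a b = 1)
    (Δ₁ Δ₂ : Finset V) (h12 : Δ₁ ⊆ Δ₂) :
    (mdel (1 - P) Δ₁).det ≤ (mdel (1 - P) Δ₂).det ∧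
    ∀ Δ : Finset V, 0 ≤ (mdel (1 - P) Δ).det := by
  have hZ : (1 - P).IsZMatrix := isZMatrix_one_sub hpos
  have hdiag : ∀ a, (1 - P) a a ≤ 1 := fun a => by simpa using hpos a a
  have hrowSum : ∀ a, 0 ≤ ∑ b, (1 - P) a b := fun a => by
    simp [Matrix.sub_apply, Finset.sum_sub_distrib, one_apply, hrow]
  have hle : ∀ {Δ Δ' : Finset V}, Δ ⊆ Δ' → ∀ a b,
      (1 - P).withIdentityOn Δ a b ≤ (1 - P).withIdentityOn Δ' a b :=
    withIdentityOn_le_withIdentityOn hZ hdiag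
  have hrowSumΔ (Δ : Finset V) : ∀ a, 0 ≤ ∑ b, (1 - P).withIdentityOn Δ a b :=
    rowSum_nonneg_of_le hrowSum (by simpa using hle (Finset.empty_subset Δ))
  simp only [mdel, ← det_withIdentityOn]
  refine ⟨?_, fun Δ => (hZ.withIdentityOn Δ).det_nonneg (hrowSumΔ Δ)⟩
  exact (hZ.withIdentityOn Δ₁).det_le_det (hrowSumΔ Δ₁) (hZ.withIdentityOn Δ₂) (hle h12)

/-- For a stochastic matrix `P` and subsets `Δ₁ ⊆ Δ₂ ⊊ V`,
`det((I-P)^{Δ₁}) ≤ det((I-P)^{Δ₂})`; in particular all such determinants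
are nonnegative. -/
theorem stmt12 {V : Type*} [Fintype V] [DecidableEq V] (P : Matrix V V ℝ)
    (hpos : ∀ a b, 0 ≤ P a b) (hrow : ∀ a, ∑ b, P a b = 1)
    (Δ₁ Δ₂ : Finset V) (h12 : Δ₁ ⊆ Δ₂) (hproper : Δ₂ ≠ Finset.univ) :
    (mdel (1 - P) Δ₁).det ≤ (mdel (1 - P) Δ₂).det ∧
    ∀ Δ : Finset V, 0 ≤ (mdel (1 - P) Δ).det :=
  stmt12_general P hpos hrow Δ₁ Δ₂ h12
end

section
/- Let Γ be a finite connected simple graph with Laplacian 𝓛. For any ordering (x_1, ..., x_N) of the vertices, the product over m = 1,...,N−1 of the (x_{m+1}, x_{m+1}) entry of (𝓛^{{x_1,...,x_m}})^{-1} equals 1/det(𝓛^{{x_1}}) = N/Π_𝓛, and in particular is independent of the ordering. -/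
open Matrix BigOperators

/-!
By Cramer's rule `((𝓛^Δ)⁻¹)_{vv} = det 𝓛^{Δ ∪ {v}} / det 𝓛^Δ`, so the product telescopes to
`det 𝓛^V / det 𝓛^{{x_1}} = 1 / det 𝓛^{{x_1}}`. No minor vanishes: for `Δ ≠ ∅` the matrix `𝓛^Δ`
is positive definite, because a vector on which the Laplacian quadratic form vanishes is constant
on the connected graph, hence zero if it vanishes on `Δ`.

For `Π_𝓛`: the coefficient of `λ` in the characteristic polynomial of a matrix is `± tr (adj 𝓛)`,
and `(adj 𝓛)_{vv} = det 𝓛^{{v}}` does not depend on `v`, since the columns of `adj 𝓛` lie in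
`ker 𝓛`, which consists of constant vectors, and `adj 𝓛` is symmetric.
-/

open Polynomial Function

namespace Matrix

variable {n : Type*} [Fintype n] [DecidableEq n]

theorem charpoly_coeff_one_of_det_ne_zero {K : Type*} [Field K] (A : Matrix n n K)
    (hA : A.det ≠ 0) :
    A.charpoly.coeff 1 = (-1) ^ (Fintype.card n + 1) * A.adjugate.trace := by
  have hfactor : charmatrix A = (-A).map C * (1 + (X : K[X]) • (-A⁻¹).map C) := by
    rw [Matrix.mul_add, Matrix.mul_one, Matrix.mul_smul, ← Matrix.map_mul, neg_mul_neg,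
      mul_nonsing_inv _ hA.isUnit]
    ext i j
    by_cases hij : i = j <;> simp [hij, sub_eq_neg_add]
  rw [charpoly, hfactor, det_mul, ← RingHom.mapMatrix_apply, ← RingHom.map_det, coeff_C_mul,
    coeff_det_one_add_X_smul_one, det_neg, trace_neg, inv_def, trace_smul, Ring.inverse_eq_inv',
    smul_eq_mul]
  field_simp
  ring

theorem map_charpoly_coeff_one_sub {R S : Type*} [CommRing R] [CommRing S] (f : R →+* S)
    (M : Matrix n n R) :
    f (M.charpoly.coeff 1 - (-1) ^ (Fintype.card n + 1) * M.adjugate.trace)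
      = (M.map f).charpoly.coeff 1 - (-1) ^ (Fintype.card n + 1) * (M.map f).adjugate.trace := by
  rw [charpoly_map, coeff_map, ← RingHom.mapMatrix_apply, ← RingHom.map_adjugate,
    RingHom.mapMatrix_apply, ← AddMonoidHom.map_trace]
  simp

/-- `X + A = charmatrix (-A)` is invertible over the fraction field of `K[X]`, where the
invertible case applies; specialising at `X = 0` gives the identity for `A`. -/
theorem charpoly_coeff_one_s15 {K : Type*} [Field K] (A : Matrix n n K) :
    A.charpoly.coeff 1 = (-1) ^ (Fintype.card n + 1) * A.adjugate.trace := by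
  let φ := algebraMap K[X] (FractionRing K[X])
  have hdet : ((charmatrix (-A)).map φ).det ≠ 0 := by
    rw [← RingHom.mapMatrix_apply, ← RingHom.map_det]
    exact (map_ne_zero_iff _ (IsFractionRing.injective _ _)).mpr (charpoly_monic (-A)).ne_zero
  have hgeneric := map_charpoly_coeff_one_sub φ (charmatrix (-A))
  rw [charpoly_coeff_one_of_det_ne_zero _ hdet, sub_self,
    map_eq_zero_iff _ (IsFractionRing.injective _ _)] at hgeneric
  have heval : (charmatrix (-A)).map (evalRingHom 0) = A := by
    ext i j
    by_cases hij : i = j <;> simp [hij]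
  have hA := map_charpoly_coeff_one_sub (evalRingHom 0) (charmatrix (-A))
  rwa [hgeneric, map_zero, heval, eq_comm, sub_eq_zero] at hA

theorem dotProduct_mulVec_submatrix_of_injective {m n R : Type*} [Fintype m] [Fintype n]
    [CommSemiring R] (M : Matrix n n R) {e : m → n} (he : Injective e) (x : m → R) :
    x ⬝ᵥ (M.submatrix e e *ᵥ x) = extend e x 0 ⬝ᵥ (M *ᵥ extend e x 0) := by
  have hextend (w : n → R) : extend e x 0 ⬝ᵥ w = x ⬝ᵥ (w ∘ e) :=
    (Fintype.sum_of_injective e he _ _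
      (fun i hi => by rw [extend_apply' _ _ _ hi, Pi.zero_apply, zero_mul])
      (fun i => by rw [he.extend_apply]; rfl)).symm
  rw [hextend]
  congr 1
  ext i
  simp only [Function.comp_apply, mulVec]
  rw [dotProduct_comm _ (extend e x 0), hextend, dotProduct_comm]
  rfl

end Matrix

theorem Fin.prod_univ_succ_div_castSucc {G : Type*} [CommGroupWithZero G] {n : ℕ}
    (f : Fin (n + 1) → G) (hf : ∀ i, f i ≠ 0) :
    ∏ i : Fin n, f i.succ / f i.castSucc = f (Fin.last n) / f 0 := by
  induction n with
  | zero => simp [div_self (hf 0)]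
  | succ n ih =>
    simp only [Fin.prod_univ_castSucc, Fin.succ_castSucc]
    rw [ih (fun i => f i.castSucc) (fun i => hf _)]
    simp only [Fin.succ_last, Fin.castSucc_zero]
    rw [mul_comm]
    exact div_mul_div_cancel₀ (hf _)

section mdel

variable {V : Type*} [Fintype V] [DecidableEq V]

theorem adjugate_apply_self_eq_det_mdel (M : Matrix V V ℝ) (v : V) :
    M.adjugate v v = (mdel M {v}).det := by
  let p : V → Prop := (· ∉ ({v} : Finset V))
  have : Unique {a // ¬ p a} :=
    { default := ⟨v, by simp [p]⟩
      uniq := fun a => Subtype.ext (by simpa [p] using a.2) }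
  rw [adjugate_apply, twoBlockTriangular_det _ p, det_unique (toSquareBlockProp _ fun a => ¬ p a)]
  · have hblock : toSquareBlockProp (M.updateRow v (Pi.single v 1)) p = mdel M {v} := by
      ext i j
      rw [toSquareBlockProp_def, of_apply, updateRow_ne (by simpa [p] using i.2)]
      rfl
    have hdefault : ((default : {a // ¬ p a}) : V) = v := by
      simpa [p] using (default : {a // ¬ p a}).2
    simp [hblock, toSquareBlockProp_def, hdefault]
  · intro i hi j hj
    rw [Finset.mem_singleton.mp (not_not.mp hi), updateRow_self, Pi.single_eq_of_ne]
    simpa [p] using hj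

theorem det_mdel_mdel (M : Matrix V V ℝ) (Δ : Finset V) (x : {a // a ∉ Δ}) :
    (mdel (mdel M Δ) {x}).det = (mdel M (insert x.1 Δ)).det := by
  let ε : {s : {a // a ∉ Δ} // s ∉ ({x} : Finset _)} ≃ {a // a ∉ insert x.1 Δ} :=
    (Equiv.subtypeSubtypeEquivSubtypeExists _ _).trans (Equiv.subtypeEquivRight fun a => by
      simp [Subtype.ext_iff, and_comm])
  exact det_submatrix_equiv_self ε (mdel M (insert x.1 Δ))

theorem inv_mdel_apply_self (M : Matrix V V ℝ) {Δ : Finset V} {v : V} (hv : v ∉ Δ) :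
    (mdel M Δ)⁻¹ ⟨v, hv⟩ ⟨v, hv⟩ = (mdel M (insert v Δ)).det / (mdel M Δ).det := by
  rw [inv_def, Matrix.smul_apply, adjugate_apply_self_eq_det_mdel, det_mdel_mdel,
    Ring.inverse_eq_inv', smul_eq_mul, div_eq_inv_mul]

theorem prod_inv_mdel_Iio_apply_self {n : ℕ} (M : Matrix V V ℝ) (e : Fin (n + 1) ≃ V)
    (hM : ∀ j, (mdel M ((Finset.Iic j).image e)).det ≠ 0) :
    ∏ m ∈ Finset.univ.filter (fun m : Fin (n + 1) => m ≠ 0),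
        (mdel M ((Finset.Iio m).image e))⁻¹ ⟨e m, by simp⟩ ⟨e m, by simp⟩
      = 1 / (mdel M {e 0}).det := by
  have hlast : (mdel M ((Finset.Iic (Fin.last n)).image e)).det = 1 := by
    have : IsEmpty {a // a ∉ (Finset.Iic (Fin.last n)).image e} :=
      ⟨fun a => a.2 (Finset.mem_image.mpr
        ⟨e.symm a, Finset.mem_Iic.mpr (Fin.le_last _), e.apply_symm_apply a⟩)⟩
    exact det_isEmpty
  have hzero : (Finset.Iic (0 : Fin (n + 1))).image e = {e 0} := by
    rw [← Finset.image_singleton, ← bot_eq_zero, ← Finset.Iic_bot]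
  have hfilter : Finset.univ.filter (fun m : Fin (n + 1) => m ≠ 0) = Finset.Ioi 0 := by
    ext m
    simp
  rw [hfilter, Fin.prod_Ioi_zero, ← hlast, ← hzero,
    ← Fin.prod_univ_succ_div_castSucc (fun j => (mdel M ((Finset.Iic j).image e)).det) hM]
  refine Finset.prod_congr rfl fun i _ => ?_
  have hIio : Finset.Iio i.succ = Finset.Iic i.castSucc := by
    ext j
    simp [Fin.lt_def, Fin.le_def]
  rw [inv_mdel_apply_self, ← Finset.image_insert, Finset.Iio_insert, hIio]

end mdel

namespace SimpleGraph

variable {V : Type*} [Fintype V] [DecidableEq V] (G : SimpleGraph V) [DecidableRel G.Adj]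

theorem posDef_mdel_lapMatrix (hG : G.Connected) {Δ : Finset V} (hΔ : Δ.Nonempty) :
    (mdel (G.lapMatrix ℝ) Δ).PosDef := by
  refine .of_dotProduct_mulVec_pos ((isHermitian_lapMatrix ℝ G).submatrix _) fun x hx => ?_
  set y := extend Subtype.val x 0
  rw [star_trivial, mdel, dotProduct_mulVec_submatrix_of_injective _ Subtype.val_injective]
  refine ((posSemidef_lapMatrix ℝ G).dotProduct_mulVec_nonneg y).lt_of_ne' fun hy => hx ?_
  rw [star_trivial, ← toLinearMap₂'_apply',
    lapMatrix_toLinearMap₂'_apply'_eq_zero_iff_forall_reachable] at hy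
  obtain ⟨d, hd⟩ := hΔ
  ext a
  have hyd : y d = 0 := extend_apply' _ _ _ (by rintro ⟨b, rfl⟩; exact b.2 hd)
  calc x a = y a := (Subtype.val_injective.extend_apply x 0 a).symm
    _ = y d := hy _ _ (hG.preconnected a d)
    _ = 0 := hyd

theorem adjugate_lapMatrix_apply_eq (hG : G.Connected) (a b j : V) :
    (G.lapMatrix ℝ).adjugate a j = (G.lapMatrix ℝ).adjugate b j := by
  have : Nonempty V := ⟨j⟩
  have hcol : G.lapMatrix ℝ *ᵥ (G.lapMatrix ℝ).adjugate.col j = 0 := by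
    rw [← mulVec_single_one, ← cramer_eq_adjugate_mulVec, mulVec_cramer, det_lapMatrix_eq_zero,
      zero_smul]
  exact lapMatrix_mulVec_eq_zero_iff_forall_reachable G |>.mp hcol a b (hG.preconnected a b)

theorem adjugate_lapMatrix_apply_self_eq (hG : G.Connected) (v w : V) :
    (G.lapMatrix ℝ).adjugate v v = (G.lapMatrix ℝ).adjugate w w :=
  calc (G.lapMatrix ℝ).adjugate v v = (G.lapMatrix ℝ).adjugate w v :=
        adjugate_lapMatrix_apply_eq G hG v w v
    _ = (G.lapMatrix ℝ).adjugate v w := (isSymm_lapMatrix ℝ G).adjugate.apply v w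
    _ = (G.lapMatrix ℝ).adjugate w w := adjugate_lapMatrix_apply_eq G hG v w w

theorem prodNZ_lapMatrix_eq_card_mul_det_mdel (hG : G.Connected) (v : V) :
    prodNZ (G.lapMatrix ℝ) = Fintype.card V * (mdel (G.lapMatrix ℝ) {v}).det := by
  have hcard : 0 < Fintype.card V := Fintype.card_pos_iff.mpr ⟨v⟩
  have hsign : ((-1 : ℝ) ^ (Fintype.card V - 1)) * (-1) ^ (Fintype.card V + 1) = 1 := by
    rw [← pow_add, Even.neg_one_pow ⟨Fintype.card V, by omega⟩]
  rw [prodNZ, charpoly_coeff_one_s15, ← mul_assoc, hsign, one_mul, trace]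
  simp only [Matrix.diag_apply, adjugate_lapMatrix_apply_self_eq G hG _ v,
    adjugate_apply_self_eq_det_mdel, Finset.sum_const, Finset.card_univ, nsmul_eq_mul]

end SimpleGraph

/-- For a finite connected simple graph with Laplacian `𝓛` and any ordering
`(x_1, …, x_N)` of the vertices (given by an equivalence `e : Fin N ≃ V`),
`∏_{m=1}^{N-1} ((𝓛^{{x_1,…,x_m}})⁻¹)_{x_{m+1} x_{m+1}} = 1/det(𝓛^{{x_1}}) = N/Π_𝓛`;
in particular the product is independent of the ordering. -/
theorem stmt15 {V : Type*} [Fintype V] [DecidableEq V]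
    (G : SimpleGraph V) [DecidableRel G.Adj] (hG : G.Connected)
    (n : ℕ) (e : Fin (n + 1) ≃ V) :
    (∏ m ∈ Finset.univ.filter (fun m : Fin (n + 1) => m ≠ 0),
        ((mdel (G.lapMatrix ℝ) ((Finset.Iio m).image e))⁻¹
          ⟨e m, by simp⟩ ⟨e m, by simp⟩))
      = 1 / (mdel (G.lapMatrix ℝ) {e 0}).det ∧
    (∏ m ∈ Finset.univ.filter (fun m : Fin (n + 1) => m ≠ 0),
        ((mdel (G.lapMatrix ℝ) ((Finset.Iio m).image e))⁻¹
          ⟨e m, by simp⟩ ⟨e m, by simp⟩))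
      = Fintype.card V / prodNZ (G.lapMatrix ℝ) := by
  have hprod := prod_inv_mdel_Iio_apply_self (G.lapMatrix ℝ) e fun j =>
    (G.posDef_mdel_lapMatrix hG ⟨e j, by simp⟩).det_pos.ne'
  refine ⟨hprod, hprod.trans ?_⟩
  have : Nonempty V := ⟨e 0⟩
  have hcard : (Fintype.card V : ℝ) ≠ 0 := Nat.cast_ne_zero.mpr Fintype.card_ne_zero
  rw [G.prodNZ_lapMatrix_eq_card_mul_det_mdel hG (e 0), div_mul_cancel_left₀ hcard, one_div]
end

section
/- Cayley's formula: the number of spanning trees of the complete graph on N+1 vertices is (N+1)^{N−1}. Equivalently, for the Laplacian 𝓛 of K_{N+1} (which is (N+1)I − J restricted appropriately), det(𝓛^{{y}}) = (N+1)^{N−1} for any vertex y. -/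
open Matrix BigOperators

/-!
Trees are counted by the Prüfer correspondence. Removing a leaf `a` of a tree on a vertex set `S`
and recording its neighbour `b` leaves a tree on `S \ {a}`; iterating down to two vertices produces
a word of length `#S - 2` over `S`. A vertex occurs in the word exactly when it is not a leaf, so
at each step the decoder knows the set of leaves, hence the removed leaf `a`, and re-attaches it to
`b`. Thus trees on `n` vertices correspond to words of length `n - 2`, and there are `n ^ (n - 2)`.

For the determinant, the Laplacian of `K_{N+1}` is `(N+1) I - J`; deleting a row and a column gives
the same matrix of size `N`, a rank-one perturbation of `(N+1) I`, whose determinant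
`(N+1)^N (1 - N/(N+1)) = (N+1)^(N-1)` is given by the matrix determinant lemma.
-/

open Finset

namespace SimpleGraph

variable {V : Type*}

theorem Walk.eq_or_mem_support_of_mem_support {G : SimpleGraph V} {u v w : V} (p : G.Walk u v)
    (hw : w ∈ p.support) : w = u ∨ w ∈ G.support := by
  induction p with
  | nil => exact .inl (by simpa using hw)
  | cons h p ih =>
    rcases List.mem_cons.mp hw with rfl | hw
    · exact .inl rfl
    · exact .inr ((ih hw).elim (· ▸ h.right_mem_support) id)

/-- A tree with vertex set `S`, kept as a graph on the ambient type so that removing a leaf does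
not change the vertex type. -/
structure IsTreeOn (T : SimpleGraph V) (S : Finset V) : Prop where
  support_subset : T.support ⊆ S
  isAcyclic : T.IsAcyclic
  reachable : ∀ x ∈ S, ∀ y ∈ S, T.Reachable x y

open scoped Classical in
noncomputable def leaves (T : SimpleGraph V) (S : Finset V) : Finset V :=
  {x ∈ S | ∃! y, T.Adj x y}

variable {T : SimpleGraph V} {S : Finset V} {a b x y : V}

@[simp]
theorem mem_leaves : x ∈ leaves T S ↔ x ∈ S ∧ ∃! y, T.Adj x y := by
  classical
  simp [leaves]

theorem leaves_subset : leaves T S ⊆ S := fun _ hx => (mem_leaves.mp hx).1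

namespace IsTreeOn

theorem mem_of_adj (h : IsTreeOn T S) (hxy : T.Adj x y) : x ∈ S :=
  h.support_subset hxy.left_mem_support

theorem notMem_support (h : IsTreeOn T S) (ha : a ∉ S) : a ∉ T.support :=
  fun h' => ha (h.support_subset h')

theorem exists_adj (h : IsTreeOn T S) (hS : 2 ≤ #S) (hx : x ∈ S) : ∃ y, T.Adj x y := by
  obtain ⟨z, hz, hzx⟩ := S.exists_mem_ne hS x
  exact (h.reachable x hx z hz).nonempty_neighborSet_left hzx.symm

theorem isTree_induce (h : IsTreeOn T S) (hS : S.Nonempty) : (T.induce S).IsTree where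
  connected := by
    have : Nonempty S := hS.coe_sort
    refine ⟨fun ⟨x, hx⟩ ⟨y, hy⟩ => ?_⟩
    obtain ⟨p⟩ := h.reachable x hx y hy
    exact ⟨p.induce _ fun w hw => (p.eq_or_mem_support_of_mem_support hw).elim
      (· ▸ hx) (h.support_subset ·)⟩
  isAcyclic := h.isAcyclic.induce _

theorem leaves_nonempty (h : IsTreeOn T S) (hS : 2 ≤ #S) : (leaves T S).Nonempty := by
  classical
  have : Nontrivial S := (one_lt_card_iff_nontrivial.mp hS).coe_sort
  obtain ⟨⟨x, hx⟩, hdeg⟩ :=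
    (h.isTree_induce (card_pos.mp (by omega))).exists_vert_degree_one_of_nontrivial
  obtain ⟨⟨y, hy⟩, hxy, huniq⟩ := degree_eq_one_iff_existsUnique_adj.mp hdeg
  refine ⟨x, mem_leaves.mpr ⟨hx, y, hxy, fun z hxz => ?_⟩⟩
  exact congrArg Subtype.val (huniq ⟨z, h.mem_of_adj hxz.symm⟩ hxz)

end IsTreeOn

theorem sup_edge_adj_left (ha : a ∉ T.support) (hab : a ≠ b) :
    (T ⊔ edge a b).Adj a y ↔ y = b := by
  simp only [mem_support, not_exists] at ha
  simp only [sup_adj, edge_adj, ha y, false_or]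
  grind

theorem deleteIncidenceSet_sup_edge (ha : a ∉ T.support) :
    (T ⊔ edge a b).deleteIncidenceSet a = T := by
  ext x y
  have hx : T.Adj x y → x ≠ a := fun h hxa => ha (hxa ▸ h.left_mem_support)
  have hy : T.Adj x y → y ≠ a := fun h hya => ha (hya ▸ h.right_mem_support)
  simp only [deleteIncidenceSet_adj, sup_adj, edge_adj]
  grind

theorem eq_deleteIncidenceSet_sup_edge (hab : T.Adj a b) (ha : ∀ y, T.Adj a y → y = b) :
    T = T.deleteIncidenceSet a ⊔ edge a b := by
  ext x y
  have := ha x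
  have := ha y
  simp only [deleteIncidenceSet_adj, sup_adj, edge_adj]
  grind [adj_comm, Adj.ne]

section Surgery

variable [DecidableEq V]

theorem IsTreeOn.deleteIncidenceSet (h : IsTreeOn T S) (ha : (T.neighborSet a).Subsingleton) :
    IsTreeOn (T.deleteIncidenceSet a) (S.erase a) where
  support_subset x hx := by
    obtain ⟨hxy, hxa, -⟩ := deleteIncidenceSet_adj.mp hx.choose_spec
    exact mem_erase.mpr ⟨hxa, h.mem_of_adj hxy⟩
  isAcyclic := h.isAcyclic.anti (T.deleteIncidenceSet_le a)
  reachable x hx y hy := by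
    obtain ⟨hxa, hx⟩ := mem_erase.mp hx
    obtain ⟨hya, hy⟩ := mem_erase.mp hy
    obtain ⟨p, hp⟩ := (h.reachable x hx y hy).exists_isPath
    have hap : a ∉ p.support :=
      hp.isTrail.not_mem_support_of_subsingleton_neighborSet hxa.symm hya.symm ha
    exact ⟨p.toDeleteEdges _ fun e he hea => hap (p.mem_support_of_mem_edges he hea.2)⟩

theorem IsTreeOn.sup_edge (h : IsTreeOn T (S.erase a)) (ha : a ∈ S) (hb : b ∈ S.erase a) :
    IsTreeOn (T ⊔ edge a b) S := by
  have hba : b ≠ a := ne_of_mem_erase hb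
  have haT : a ∉ T.support := h.notMem_support (S.notMem_erase a)
  refine ⟨?_, ?_, ?_⟩
  · rintro x ⟨y, hxy | hxy⟩
    · exact mem_of_mem_erase (h.mem_of_adj hxy)
    · rcases ((edge_adj ..).mp hxy).1 with ⟨rfl, -⟩ | ⟨rfl, -⟩
      exacts [ha, mem_of_mem_erase hb]
  · refine h.isAcyclic.sup_edge_of_not_reachable
      (not_reachable_of_neighborSet_left_eq_empty hba.symm ?_)
    exact Set.eq_empty_of_forall_notMem fun y hy => haT hy.left_mem_support
  · have hreach : ∀ z ∈ S, (T ⊔ edge a b).Reachable z b := by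
      intro z hz
      by_cases hza : z = a
      · exact hza ▸ ((sup_edge_adj_left haT hba.symm).mpr rfl).reachable
      · exact (h.reachable z (mem_erase.mpr ⟨hza, hz⟩) b hb).mono le_sup_left
    exact fun x hx y hy => (hreach x hx).trans (hreach y hy).symm

theorem leaves_sup_edge (h : IsTreeOn T (S.erase a)) (ha : a ∈ S) (hb : b ∈ S.erase a)
    (hS : 2 ≤ #(S.erase a)) :
    leaves (T ⊔ edge a b) S = insert a ((leaves T (S.erase a)).erase b) := by
  have hba : b ≠ a := ne_of_mem_erase hb
  have haT : a ∉ T.support := h.notMem_support (S.notMem_erase a)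
  ext x
  simp only [mem_leaves, mem_insert, mem_erase]
  by_cases hxa : x = a
  · subst hxa
    simpa [sup_edge_adj_left haT hba.symm] using ha
  by_cases hxb : x = b
  · subst hxb
    obtain ⟨c, hbc⟩ := h.exists_adj hS hb
    have hca : c ≠ a := fun hca => haT (hca ▸ hbc.right_mem_support)
    refine iff_of_false ?_ (by simp [hxa])
    rintro ⟨-, y, -, hy⟩
    exact hca ((hy a (Or.inr ((edge_adj ..).mpr ⟨.inr ⟨rfl, rfl⟩, hba⟩))).trans
      (hy c (Or.inl hbc)).symm).symm
  · have hadj : ∀ y, (T ⊔ edge a b).Adj x y ↔ T.Adj x y := by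
      simp [edge_adj, hxa, hxb]
    simp [hadj, hxa, hxb]

theorem IsTreeOn.leaf_decomposition (h : IsTreeOn T S) (ha : a ∈ leaves T S) (hab : T.Adj a b) :
    IsTreeOn (T.deleteIncidenceSet a) (S.erase a) ∧ b ∈ S.erase a ∧
      T = T.deleteIncidenceSet a ⊔ edge a b := by
  obtain ⟨-, c, -, hc⟩ := mem_leaves.mp ha
  have hb : ∀ y, T.Adj a y → y = b := fun y hy => (hc y hy).trans (hc b hab).symm
  exact ⟨h.deleteIncidenceSet fun y hy z hz => (hb y hy).trans (hb z hz).symm,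
    mem_erase.mpr ⟨hab.ne', h.mem_of_adj hab.symm⟩, eq_deleteIncidenceSet_sup_edge hab hb⟩

theorem fromRel_mem_pair (u v : V) :
    fromRel (fun x y => x ∈ ({u, v} : Finset V) ∧ y ∈ ({u, v} : Finset V)) = edge u v := by
  ext x y
  simp only [fromRel_adj, mem_insert, mem_singleton, edge_adj]
  grind

theorem IsTreeOn.eq_edge {u v : V} (h : IsTreeOn T {u, v}) (huv : u ≠ v) : T = edge u v := by
  obtain ⟨w, huw⟩ := h.exists_adj (card_pair huv).ge (mem_insert_self u {v})
  have hwv : w = v := by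
    have := h.mem_of_adj huw.symm
    simp only [mem_insert, mem_singleton] at this
    exact this.resolve_left huw.ne'
  subst hwv
  ext x y
  have hx : T.Adj x y → x ∈ ({u, w} : Finset V) := h.mem_of_adj
  have hy : T.Adj x y → y ∈ ({u, w} : Finset V) := fun hxy => h.mem_of_adj hxy.symm
  simp only [mem_insert, mem_singleton] at hx hy
  rw [edge_adj]
  grind [adj_comm, Adj.ne]

theorem isTreeOn_edge {u v : V} (huv : u ≠ v) : IsTreeOn (edge u v) {u, v} := by
  have hbot : IsTreeOn (⊥ : SimpleGraph V) (({u, v} : Finset V).erase u) := by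
    rw [erase_insert (by simpa using huv)]
    refine ⟨by simp, isAcyclic_bot, ?_⟩
    simp
  simpa using hbot.sup_edge (mem_insert_self u {v}) (by simp [huv.symm])

theorem leaves_edge {u v : V} (huv : u ≠ v) : leaves (edge u v) {u, v} = {u, v} := by
  ext x
  simp only [mem_leaves, mem_insert, mem_singleton, edge_adj, and_iff_left_iff_imp]
  rintro (rfl | rfl)
  · exact ⟨v, by grind⟩
  · exact ⟨u, by grind⟩

theorem IsTreeOn.leaves_eq_self (h : IsTreeOn T S) (hS : #S = 2) : leaves T S = S := by
  obtain ⟨u, v, huv, rfl⟩ := card_eq_two.mp hS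
  rw [h.eq_edge huv, leaves_edge huv]

theorem mem_sdiff_toFinset_cons_spec {s : List V} (ha : a ∈ S \ (b :: s).toFinset)
    (hsS : ∀ x ∈ b :: s, x ∈ S) (hS : #S = s.length + 3) :
    a ∈ S ∧ b ∈ S.erase a ∧ (∀ x ∈ s, x ∈ S.erase a) ∧ #(S.erase a) = s.length + 2 := by
  simp only [mem_sdiff, List.mem_toFinset, List.mem_cons, not_or] at ha
  refine ⟨ha.1, mem_erase.mpr ⟨Ne.symm ha.2.1, hsS b (.head s)⟩,
    fun x hx => mem_erase.mpr ⟨fun hxa => ha.2.2 (hxa ▸ hx), hsS x (.tail b hx)⟩, ?_⟩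
  rw [card_erase_of_mem ha.1, hS]
  rfl

end Surgery

section Prufer

variable [Nonempty V]

/- `k` is the length of the word, `#S - 2`. Any choice of leaf works in place of the classical
"smallest leaf", as long as the decoder makes the same choice: it sees the set of leaves as the
vertices missing from the rest of the word. -/
noncomputable def pruferCode [DecidableEq V] : ℕ → SimpleGraph V → Finset V → List V
  | 0, _, _ => []
  | k + 1, T, S =>
    let a := Classical.epsilon (· ∈ leaves T S)
    Classical.epsilon (T.Adj a) :: pruferCode k (T.deleteIncidenceSet a) (S.erase a)

noncomputable def pruferDecode [DecidableEq V] : List V → Finset V → SimpleGraph V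
  | [], S => fromRel fun x y => x ∈ S ∧ y ∈ S
  | b :: s, S =>
    let a := Classical.epsilon (· ∈ S \ (b :: s).toFinset)
    pruferDecode s (S.erase a) ⊔ edge a b

theorem IsTreeOn.epsilon_mem_leaves (h : IsTreeOn T S) (hS : 2 ≤ #S) :
    Classical.epsilon (· ∈ leaves T S) ∈ leaves T S :=
  Classical.epsilon_spec (h.leaves_nonempty hS)

theorem adj_epsilon_of_mem_leaves (ha : a ∈ leaves T S) : T.Adj a (Classical.epsilon (T.Adj a)) :=
  Classical.epsilon_spec (mem_leaves.mp ha).2.exists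

variable [DecidableEq V]

theorem length_pruferCode (k : ℕ) (T : SimpleGraph V) (S : Finset V) :
    (pruferCode k T S).length = k := by
  induction k generalizing T S with
  | zero => rfl
  | succ k ih => simp [pruferCode, ih]

theorem IsTreeOn.toFinset_pruferCode {k : ℕ} (h : IsTreeOn T S) (hS : #S = k + 2) :
    (pruferCode k T S).toFinset = S \ leaves T S := by
  induction k generalizing T S with
  | zero => simp [pruferCode, h.leaves_eq_self hS]
  | succ k ih =>
    have ha := h.epsilon_mem_leaves (by omega)
    have hab := adj_epsilon_of_mem_leaves ha
    rw [pruferCode, List.toFinset_cons]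
    generalize Classical.epsilon (· ∈ leaves T S) = a at ha hab ⊢
    generalize Classical.epsilon (T.Adj a) = b at hab ⊢
    obtain ⟨h', hb, hT⟩ := h.leaf_decomposition ha hab
    have hS' : #(S.erase a) = k + 2 := by rw [card_erase_of_mem (leaves_subset ha)]; omega
    have hL : leaves T S = insert a ((leaves (T.deleteIncidenceSet a) (S.erase a)).erase b) := by
      conv_lhs => rw [hT]
      exact leaves_sup_edge h' (leaves_subset ha) hb (by omega)
    rw [ih h' hS', hL]
    have := mem_erase.mp hb
    ext x
    simp only [mem_insert, mem_sdiff, mem_erase]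
    grind

theorem IsTreeOn.pruferDecode_pruferCode {k : ℕ} (h : IsTreeOn T S) (hS : #S = k + 2) :
    pruferDecode (pruferCode k T S) S = T := by
  induction k generalizing T S with
  | zero =>
    obtain ⟨u, v, huv, rfl⟩ := card_eq_two.mp hS
    rw [pruferCode, pruferDecode, fromRel_mem_pair, h.eq_edge huv]
  | succ k ih =>
    have hcode : S \ (pruferCode (k + 1) T S).toFinset = leaves T S := by
      rw [h.toFinset_pruferCode hS, Finset.sdiff_sdiff_eq_self leaves_subset]
    have ha := h.epsilon_mem_leaves (by omega)
    have hab := adj_epsilon_of_mem_leaves ha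
    rw [pruferCode] at hcode ⊢
    rw [pruferDecode, hcode]
    generalize Classical.epsilon (· ∈ leaves T S) = a at ha hab ⊢
    generalize Classical.epsilon (T.Adj a) = b at hab ⊢
    obtain ⟨h', -, hT⟩ := h.leaf_decomposition ha hab
    have hS' : #(S.erase a) = k + 2 := by rw [card_erase_of_mem (leaves_subset ha)]; omega
    conv_rhs => rw [hT]
    rw [ih h' hS']

theorem epsilon_mem_sdiff_toFinset {s : List V} (hs : s.length < #S) :
    Classical.epsilon (· ∈ S \ s.toFinset) ∈ S \ s.toFinset := by
  refine Classical.epsilon_spec (sdiff_nonempty.mpr fun hsub => ?_)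
  have := card_le_card hsub
  have := s.toFinset_card_le
  omega

theorem isTreeOn_pruferDecode {s : List V} (hsS : ∀ x ∈ s, x ∈ S) (hS : #S = s.length + 2) :
    IsTreeOn (pruferDecode s S) S := by
  induction s generalizing S with
  | nil =>
    obtain ⟨u, v, huv, rfl⟩ := card_eq_two.mp hS
    rw [pruferDecode, fromRel_mem_pair]
    exact isTreeOn_edge huv
  | cons b s ih =>
    have ha := epsilon_mem_sdiff_toFinset (S := S) (s := b :: s) (by simp at hS ⊢; omega)
    rw [pruferDecode]
    generalize Classical.epsilon (· ∈ S \ (b :: s).toFinset) = a at ha ⊢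
    obtain ⟨haS, hb, hs, hS'⟩ := mem_sdiff_toFinset_cons_spec ha hsS hS
    exact (ih hs hS').sup_edge haS hb

theorem leaves_pruferDecode {s : List V} (hsS : ∀ x ∈ s, x ∈ S) (hS : #S = s.length + 2) :
    leaves (pruferDecode s S) S = S \ s.toFinset := by
  induction s generalizing S with
  | nil =>
    obtain ⟨u, v, huv, rfl⟩ := card_eq_two.mp hS
    rw [pruferDecode, fromRel_mem_pair, leaves_edge huv]
    simp
  | cons b s ih =>
    have ha := epsilon_mem_sdiff_toFinset (S := S) (s := b :: s) (by simp at hS ⊢; omega)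
    rw [pruferDecode]
    generalize Classical.epsilon (· ∈ S \ (b :: s).toFinset) = a at ha ⊢
    obtain ⟨haS, hb, hs, hS'⟩ := mem_sdiff_toFinset_cons_spec ha hsS hS
    rw [leaves_sup_edge (isTreeOn_pruferDecode hs hS') haS hb (by omega), ih hs hS']
    ext x
    simp only [mem_sdiff, List.mem_toFinset, List.mem_cons, mem_insert, mem_erase] at ha hb ⊢
    grind

theorem pruferCode_pruferDecode {s : List V} (hsS : ∀ x ∈ s, x ∈ S) (hS : #S = s.length + 2) :
    pruferCode s.length (pruferDecode s S) S = s := by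
  induction s generalizing S with
  | nil => rfl
  | cons b s ih =>
    have hL := leaves_pruferDecode hsS hS
    have ha := epsilon_mem_sdiff_toFinset (S := S) (s := b :: s) (by simp at hS ⊢; omega)
    rw [List.length_cons, pruferCode, hL, pruferDecode]
    generalize Classical.epsilon (· ∈ S \ (b :: s).toFinset) = a at ha ⊢
    obtain ⟨haS, hb, hs, hS'⟩ := mem_sdiff_toFinset_cons_spec ha hsS hS
    have haT := (isTreeOn_pruferDecode hs hS').notMem_support (S.notMem_erase a)
    have hnbr : (pruferDecode s (S.erase a) ⊔ edge a b).Adj a = (· = b) :=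
      funext fun y => propext (sup_edge_adj_left haT (ne_of_mem_erase hb).symm)
    rw [hnbr, Classical.epsilon_singleton, deleteIncidenceSet_sup_edge haT, ih hs hS']

end Prufer

section Counting

variable [Fintype V] [Nonempty V]

theorem isTreeOn_univ_iff : IsTreeOn T univ ↔ T.IsTree :=
  ⟨fun h => ⟨⟨fun x y => h.reachable x (mem_univ x) y (mem_univ y)⟩, h.isAcyclic⟩,
    fun h => ⟨by simp, h.isAcyclic, fun x _ y _ => h.connected.preconnected x y⟩⟩

variable [DecidableEq V]

noncomputable def pruferEquiv {k : ℕ} (hV : Fintype.card V = k + 2) :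
    {T : SimpleGraph V // T.IsTree} ≃ List.Vector V k where
  toFun T := ⟨pruferCode k T.1 univ, length_pruferCode k T.1 univ⟩
  invFun s := ⟨pruferDecode s.1 univ, isTreeOn_univ_iff.mp
    (isTreeOn_pruferDecode (fun x _ => mem_univ x) (by rw [card_univ, hV, s.2]))⟩
  left_inv T := Subtype.ext ((isTreeOn_univ_iff.mpr T.2).pruferDecode_pruferCode
    (by rwa [card_univ]))
  right_inv s := Subtype.ext <| by
    obtain ⟨s, rfl⟩ := s
    exact pruferCode_pruferDecode (fun x _ => mem_univ x) (by rw [card_univ, hV])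

end Counting

theorem card_isTree [Fintype V] [Nonempty V] :
    Nat.card {T : SimpleGraph V // T.IsTree} = Fintype.card V ^ (Fintype.card V - 2) := by
  classical
  obtain hV | hV := Nat.lt_or_ge (Fintype.card V) 2
  · have : Subsingleton V := Fintype.card_le_one_iff_subsingleton.mp (by omega)
    rw [Nat.sub_eq_zero_of_le hV.le, pow_zero, Nat.card_eq_one_iff_unique]
    exact ⟨inferInstance, ⟨⟨⊥, .of_subsingleton⟩⟩⟩
  · obtain ⟨k, hk⟩ := Nat.exists_eq_add_of_le' hV
    rw [Nat.card_congr (pruferEquiv hk), Nat.card_eq_fintype_card, card_vector, hk,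
      Nat.add_sub_cancel]

def spanningSubgraphEquiv (G : SimpleGraph V) (P : SimpleGraph V → Prop) :
    {H : G.Subgraph // H.IsSpanning ∧ P H.spanningCoe} ≃ {T : SimpleGraph V // T ≤ G ∧ P T} where
  toFun H := ⟨H.1.spanningCoe, H.1.spanningCoe_le, H.2.2⟩
  invFun T := ⟨toSubgraph T.1 T.2.1, toSubgraph.isSpanning _ _, T.2.2⟩
  left_inv H := Subtype.ext (Subgraph.ext (Set.eq_univ_of_forall H.2.1).symm rfl)
  right_inv _ := rfl

theorem lapMatrix_top [Fintype V] [DecidableEq V] (R : Type*) [Ring R] :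
    (⊤ : SimpleGraph V).lapMatrix R = (Fintype.card V : R) • 1 - of fun _ _ => 1 := by
  ext i j
  by_cases hij : i = j
  · subst hij
    have : 1 ≤ Fintype.card V := Fintype.card_pos_iff.mpr ⟨i⟩
    simp [lapMatrix, degMatrix, complete_graph_degree, Nat.cast_sub this]
  · simp [lapMatrix, degMatrix, hij]

end SimpleGraph

theorem Matrix.det_smul_one_sub_of_one {ι K : Type*} [Fintype ι] [DecidableEq ι] [Field K] {a : K}
    (ha : a ≠ 0) :
    det (a • (1 : Matrix ι ι K) - of fun _ _ => 1) =
      a ^ Fintype.card ι * (1 - Fintype.card ι / a) := by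
  have : a • (1 : Matrix ι ι K) - of (fun _ _ => 1) =
      a • ((1 : Matrix ι ι K) +
        replicateCol Unit (fun _ : ι => -a⁻¹) * replicateRow Unit (fun _ : ι => (1 : K))) := by
    ext i j
    simp only [sub_apply, smul_apply, add_apply, one_apply, of_apply, mul_apply,
      replicateCol_apply, replicateRow_apply, Finset.univ_unique, Finset.sum_singleton, smul_eq_mul]
    split_ifs <;> field_simp <;> ring
  rw [this, det_smul, det_one_add_replicateCol_mul_replicateRow]
  simp [dotProduct, sub_eq_add_neg, div_eq_mul_inv]

theorem mdel_smul_one_sub_of_one {V : Type*} [DecidableEq V] (c : ℝ) (Δ : Finset V) :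
    mdel (c • 1 - of fun _ _ => 1) Δ = c • 1 - of fun _ _ => 1 := by
  ext i j
  simp [mdel, one_apply, Subtype.ext_iff]

/-- Cayley's formula: the number of spanning trees of the complete graph on `N + 1`
vertices is `(N+1)^{N-1}`; equivalently, for the Laplacian `𝓛` of `K_{N+1}`,
`det(𝓛^{{y}}) = (N+1)^{N-1}` for every vertex `y`. -/
theorem stmt18 (N : ℕ) :
    Nat.card {H : (⊤ : SimpleGraph (Fin (N + 1))).Subgraph //
        H.IsSpanning ∧ H.spanningCoe.IsTree} = (N + 1) ^ (N - 1) ∧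
    ∀ y : Fin (N + 1),
      (mdel ((⊤ : SimpleGraph (Fin (N + 1))).lapMatrix ℝ) {y}).det
        = ((N : ℝ) + 1) ^ (N - 1) := by
  refine ⟨?_, fun y => ?_⟩
  · rw [Nat.card_congr (SimpleGraph.spanningSubgraphEquiv ⊤ SimpleGraph.IsTree)]
    simp only [le_top, true_and]
    rw [SimpleGraph.card_isTree, Fintype.card_fin]
    congr 1
  · have hcard : Fintype.card {a // a ∉ ({y} : Finset (Fin (N + 1)))} = N := by
      simp [Fintype.card_subtype_compl]
    rw [SimpleGraph.lapMatrix_top, mdel_smul_one_sub_of_one,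
      Matrix.det_smul_one_sub_of_one (by positivity), hcard, Fintype.card_fin]
    cases N with
    | zero => simp
    | succ n =>
      rw [Nat.add_sub_cancel, pow_succ]
      push_cast
      field_simp
      ring
end
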